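/- Let X be a generalized quadratic set of type (SC) of Q⁺(5,q), q even, satisfying properties (1) and (2), with A₁ and A₂ as defined. Then (X \ A₁) ∪ A₂ is a hyperoval of Q⁺(5,q): it is nonempty and every plane of Q⁺(5,q) meets it in either 0 or a hyperoval (q+2 points, no three collinear) of that plane; in particular every line of Q⁺(5,q) meets it in 0 or 2 points. -/

import Mathlib

/-- An abstract model of the point-line-plane geometry of the Klein quadric
`Q⁺(5,q)`: points, lines and planes (all lines and planes being fully
contained in the quadric), where every plane with its lines is a projective
plane of order `q`, every line lies in a plane, there are `2(q+1)(q²+1)`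
planes and every point lies on exactly `2(q+1)` planes. -/
structure KleinGeom (q : ℕ) where
  P : Type
  fin : Fintype P
  lines : Set (Set P)
  planes : Set (Set P)
  line_card : ∀ L ∈ lines, L.ncard = q + 1
  line_in_plane : ∀ L ∈ lines, ∃ π ∈ planes, L ⊆ π
  plane_card : ∀ π ∈ planes, π.ncard = q ^ 2 + q + 1
  plane_two_points : ∀ π ∈ planes, ∀ x ∈ π, ∀ y ∈ π, x ≠ y →
    ∃! L, L ∈ lines ∧ L ⊆ π ∧ x ∈ L ∧ y ∈ L
  plane_point_lines : ∀ π ∈ planes, ∀ x ∈ π,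
    {L | L ∈ lines ∧ L ⊆ π ∧ x ∈ L}.ncard = q + 1
  planes_card : planes.ncard = 2 * (q + 1) * (q ^ 2 + 1)
  point_planes : ∀ x : P, {π | π ∈ planes ∧ x ∈ π}.ncard = 2 * (q + 1)

variable {q : ℕ}

/-- An oval of the plane `π`: `q+1` points of `π`, no three collinear. -/
def KleinGeom.IsOval (G : KleinGeom q) (π O : Set G.P) : Prop :=
  O ⊆ π ∧ O.ncard = q + 1 ∧
    ∀ L ∈ G.lines, L ⊆ π → (L ∩ O).ncard ≤ 2

/-- `k` is the kernel (nucleus) of the oval `O` of the plane `π`: every line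
of `π` through `k` meets `O` in exactly one point. -/
def KleinGeom.IsKernel (G : KleinGeom q) (π O : Set G.P) (k : G.P) : Prop :=
  k ∈ π ∧ k ∉ O ∧ ∀ L ∈ G.lines, L ⊆ π → k ∈ L → (L ∩ O).ncard = 1

/-- A generalized quadratic set of type (SC): a point set meeting each plane
in a single point (type (S)) or an oval (type (C)), both types occurring. -/
def KleinGeom.IsGQS (G : KleinGeom q) (X : Set G.P) : Prop :=
  (∀ π ∈ G.planes, (X ∩ π).ncard = 1 ∨ G.IsOval π (X ∩ π)) ∧
    (∃ π ∈ G.planes, (X ∩ π).ncard = 1) ∧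
    (∃ π ∈ G.planes, G.IsOval π (X ∩ π))

/-- `A₁`: the points of `X` lying in some plane of type (S). -/
def KleinGeom.A1 (G : KleinGeom q) (X : Set G.P) : Set G.P :=
  {x | x ∈ X ∧ ∃ π ∈ G.planes, x ∈ π ∧ (X ∩ π).ncard = 1}

/-- `A₂`: the kernels of the oval sections `π ∩ X` over type-(C) planes. -/
def KleinGeom.A2 (G : KleinGeom q) (X : Set G.P) : Set G.P :=
  {k | ∃ π ∈ G.planes, G.IsOval π (X ∩ π) ∧ G.IsKernel π (X ∩ π) k}

/-- Property (1): every plane through a point of `A₁` has type (S). -/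
def KleinGeom.Prop1 (G : KleinGeom q) (X : Set G.P) : Prop :=
  ∀ π ∈ G.planes, ∀ x ∈ G.A1 X, x ∈ π → (X ∩ π).ncard = 1

/-- Property (2): every plane through a point `x ∈ A₂` has type (C) and `x`
is the kernel of its oval section. -/
def KleinGeom.Prop2 (G : KleinGeom q) (X : Set G.P) : Prop :=
  ∀ π ∈ G.planes, ∀ x ∈ G.A2 X, x ∈ π →
    G.IsOval π (X ∩ π) ∧ G.IsKernel π (X ∩ π) x

/-!
In a plane of even order every oval `O` has a nucleus. Counting the `q + 1` tangents against the
points of a secant shows that a point of a secant off `O` lies on exactly one tangent, so the common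
point `k` of two tangents lies on no secant, and all lines through `k` are tangents. Every tangent
then passes through `k`, so `O ∪ {k}` meets every line of the plane in `0` or `2` points.

By properties (1) and (2), `(X \ A₁) ∪ A₂` misses every type-(S) plane and meets a type-(C)
plane `π` exactly in `(X ∩ π) ∪ {k}`, `k` the nucleus of `X ∩ π`. Every line lies in a plane, so
the statement about lines follows from the one about planes.
-/
section

open Finset

theorem card_filter_eq_zero_add_sum_of_le_one {α : Type*} {s : Finset α} {f : α → ℕ}
    (h : ∀ a ∈ s, f a ≤ 1) : #{a ∈ s | f a = 0} + ∑ a ∈ s, f a = #s := by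
  have hsum : ∑ a ∈ s, f a = #{a ∈ s | ¬f a = 0} := by
    rw [card_filter]
    exact sum_congr rfl fun a ha => by have := h a ha; split_ifs <;> omega
  rw [hsum, card_filter_add_card_filter_not]

theorem Set.ncard_inter_eq_card_filter {α : Type*} (L S : Set α) [Fintype S]
    [DecidablePred (· ∈ L)] : (L ∩ S).ncard = #{y ∈ S.toFinset | y ∈ L} := by
  rw [← Set.ncard_coe_finset]
  congr 1
  ext y
  simp [and_comm]

end

namespace KleinGeom

open Finset Classical

instance (G : KleinGeom q) : Fintype G.P := G.fin

variable {G : KleinGeom q} {π O L M S X : Set G.P} {x k : G.P}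

noncomputable def pencil (G : KleinGeom q) (π : Set G.P) (x : G.P) : Finset (Set G.P) :=
  {L | L ∈ G.lines ∧ L ⊆ π ∧ x ∈ L}.toFinset

noncomputable def tangents (G : KleinGeom q) (π O : Set G.P) : Finset (Set G.P) :=
  {L | L ∈ G.lines ∧ L ⊆ π ∧ (L ∩ O).ncard = 1}.toFinset

@[simp]
theorem mem_pencil : L ∈ G.pencil π x ↔ L ∈ G.lines ∧ L ⊆ π ∧ x ∈ L :=
  Set.mem_toFinset

@[simp]
theorem mem_tangents : L ∈ G.tangents π O ↔ L ∈ G.lines ∧ L ⊆ π ∧ (L ∩ O).ncard = 1 :=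
  Set.mem_toFinset

theorem card_pencil (hπ : π ∈ G.planes) (hx : x ∈ π) : #(G.pencil π x) = q + 1 := by
  rw [pencil, ← Set.ncard_eq_toFinset_card']
  exact G.plane_point_lines π hπ x hx

theorem card_filter_pencil_mem (hπ : π ∈ G.planes) {y : G.P} (hx : x ∈ π) (hy : y ∈ π)
    (hxy : x ≠ y) : #{L ∈ G.pencil π x | y ∈ L} = 1 := by
  obtain ⟨L, hL, hLu⟩ := G.plane_two_points π hπ x hx y hy hxy
  refine card_eq_one.2 ⟨L, ext fun M => ?_⟩
  simp only [mem_filter, mem_pencil, mem_singleton, and_assoc]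
  exact ⟨hLu M, fun hM => hM ▸ hL⟩

theorem sum_pencil_ncard_inter (hπ : π ∈ G.planes) (hx : x ∈ π) (hS : S ⊆ π) (hxS : x ∉ S) :
    ∑ L ∈ G.pencil π x, (L ∩ S).ncard = S.ncard := by
  have hdc := sum_card_bipartiteAbove_eq_sum_card_bipartiteBelow
    (s := S.toFinset) (t := G.pencil π x) (r := fun y L => y ∈ L)
  simp only [bipartiteAbove, bipartiteBelow] at hdc
  rw [sum_congr rfl fun y hy => card_filter_pencil_mem hπ hx (hS (Set.mem_toFinset.1 hy))
    (ne_of_mem_of_not_mem (Set.mem_toFinset.1 hy) hxS).symm] at hdc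
  simp only [sum_const, smul_eq_mul, mul_one, ← Set.ncard_eq_toFinset_card'] at hdc
  simp only [Set.ncard_inter_eq_card_filter, hdc]

theorem inter_subsingleton (hπ : π ∈ G.planes) (hL : L ∈ G.lines) (hLπ : L ⊆ π)
    (hM : M ∈ G.lines) (hMπ : M ⊆ π) (hLM : L ≠ M) : (L ∩ M).Subsingleton := by
  intro y hy z hz
  by_contra hyz
  obtain ⟨N, -, hN⟩ := G.plane_two_points π hπ y (hLπ hy.1) z (hLπ hz.1) hyz
  exact hLM ((hN L ⟨hL, hLπ, hy.1, hz.1⟩).trans (hN M ⟨hM, hMπ, hy.2, hz.2⟩).symm)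

theorem inter_nonempty (hπ : π ∈ G.planes) (hL : L ∈ G.lines) (hLπ : L ⊆ π)
    (hM : M ∈ G.lines) (hMπ : M ⊆ π) : (L ∩ M).Nonempty := by
  by_cases hML : M ⊆ L
  · rw [Set.inter_eq_right.2 hML, ← Set.ncard_pos, G.line_card M hM]
    omega
  obtain ⟨x, hxM, hxL⟩ := Set.not_subset.1 hML
  have hle : ∀ N ∈ G.pencil π x, (N ∩ L).ncard ≤ 1 := fun N hN => by
    rw [mem_pencil] at hN
    exact Set.ncard_le_one_iff_subsingleton.2 <| inter_subsingleton hπ hN.1 hN.2.1 hL hLπ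
      (ne_of_mem_of_not_mem' hN.2.2 hxL)
  have hsum : ∑ N ∈ G.pencil π x, (N ∩ L).ncard = ∑ N ∈ G.pencil π x, 1 := by
    rw [sum_pencil_ncard_inter hπ (hMπ hxM) hLπ hxL, G.line_card L hL, sum_const,
      card_pencil hπ (hMπ hxM), smul_eq_mul, mul_one]
  have hMx : (M ∩ L).ncard = 1 :=
    (sum_eq_sum_iff_of_le hle).1 hsum M (by simpa using ⟨hM, hMπ, hxM⟩)
  rw [Set.inter_comm, ← Set.ncard_pos]
  omega

theorem IsOval.card_filter_tangents_mem (hπ : π ∈ G.planes) (hO : G.IsOval π O) {p : G.P}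
    (hp : p ∈ O) : #{t ∈ G.tangents π O | p ∈ t} = 1 := by
  have hpπ := hO.1 hp
  have hdiff : ∀ L ∈ G.pencil π p, (L ∩ (O \ {p})).ncard = (L ∩ O).ncard - 1 := fun L hL => by
    rw [← Set.inter_sdiff_assoc,
      Set.ncard_sdiff_singleton_of_mem (Set.mem_inter (mem_pencil.1 hL).2.2 hp)]
  have hle : ∀ L ∈ G.pencil π p, (L ∩ (O \ {p})).ncard ≤ 1 := fun L hL => by
    have := hO.2.2 L (mem_pencil.1 hL).1 (mem_pencil.1 hL).2.1
    rw [hdiff L hL]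
    omega
  have hzero := card_filter_eq_zero_add_sum_of_le_one hle
  rw [sum_pencil_ncard_inter hπ hpπ (Set.sdiff_subset.trans hO.1) (by simp),
    Set.ncard_sdiff_singleton_of_mem hp, hO.2.1, card_pencil hπ hpπ] at hzero
  convert (by omega : #{L ∈ G.pencil π p | (L ∩ (O \ {p})).ncard = 0} = 1) using 2
  ext L
  simp only [mem_filter, mem_tangents, mem_pencil]
  constructor
  · rintro ⟨⟨hL, hLπ, h1⟩, hpL⟩
    exact ⟨⟨hL, hLπ, hpL⟩, by rw [hdiff L (mem_pencil.2 ⟨hL, hLπ, hpL⟩), h1]⟩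
  · rintro ⟨⟨hL, hLπ, hpL⟩, h0⟩
    have hpos : 0 < (L ∩ O).ncard := (Set.ncard_pos).2 ⟨p, hpL, hp⟩
    rw [hdiff L (mem_pencil.2 ⟨hL, hLπ, hpL⟩)] at h0
    exact ⟨⟨hL, hLπ, by omega⟩, hpL⟩

theorem IsOval.card_tangents (hπ : π ∈ G.planes) (hO : G.IsOval π O) :
    #(G.tangents π O) = q + 1 := by
  have hdc := card_mul_eq_card_mul (s := O.toFinset) (t := G.tangents π O) (fun y t => y ∈ t)
    (m := 1) (n := 1) (fun p hp => hO.card_filter_tangents_mem hπ (Set.mem_toFinset.1 hp))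
    (fun t ht => by
      rw [bipartiteBelow, ← Set.ncard_inter_eq_card_filter]
      exact (mem_tangents.1 ht).2.2)
  rw [mul_one, mul_one, ← Set.ncard_eq_toFinset_card', hO.2.1] at hdc
  exact hdc.symm

theorem IsOval.exists_tangent_mem (hq : Even q) (hπ : π ∈ G.planes) (hO : G.IsOval π O)
    (hx : x ∈ π) (hxO : x ∉ O) : ∃ t ∈ G.tangents π O, x ∈ t := by
  by_contra! hno
  have heven : ∀ L ∈ G.pencil π x, Even (L ∩ O).ncard := fun L hL => by
    obtain ⟨hL, hLπ, hxL⟩ := mem_pencil.1 hL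
    have h2 := hO.2.2 L hL hLπ
    have h1 : (L ∩ O).ncard ≠ 1 := fun h1 => hno L (mem_tangents.2 ⟨hL, hLπ, h1⟩) hxL
    interval_cases h : (L ∩ O).ncard <;> simp_all
  have hsum := sum_pencil_ncard_inter hπ hx hO.1 hxO ▸ even_sum _ heven
  rw [hO.2.1] at hsum
  exact Nat.not_even_iff_odd.2 hq.add_one hsum

theorem IsOval.card_filter_tangents_mem_of_secant (hq : Even q) (hπ : π ∈ G.planes)
    (hO : G.IsOval π O) (hL : L ∈ G.lines) (hLπ : L ⊆ π) (hL2 : (L ∩ O).ncard = 2)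
    (hxL : x ∈ L) (hxO : x ∉ O) : #{t ∈ G.tangents π O | x ∈ t} = 1 := by
  set f : G.P → ℕ := fun y => #{t ∈ G.tangents π O | y ∈ t}
  have hdc := sum_card_bipartiteAbove_eq_sum_card_bipartiteBelow
    (s := L.toFinset) (t := G.tangents π O) (r := fun y t => y ∈ t)
  simp only [bipartiteAbove, bipartiteBelow, ← Set.ncard_inter_eq_card_filter] at hdc
  have htotal : ∑ y ∈ L.toFinset, f y ≤ q + 1 := by
    refine hdc ▸ (sum_le_card_nsmul _ _ 1 fun t ht => ?_).trans_eq (by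
      rw [hO.card_tangents hπ, smul_eq_mul, mul_one])
    obtain ⟨ht, htπ, ht1⟩ := mem_tangents.1 ht
    exact Set.ncard_le_one_iff_subsingleton.2 <|
      inter_subsingleton hπ ht htπ hL hLπ (by rintro rfl; omega)
  have hon_sub : (L ∩ O).toFinset ⊆ L.toFinset :=
    Set.toFinset_subset_toFinset.2 Set.inter_subset_left
  have hon : ∑ y ∈ (L ∩ O).toFinset, f y = 2 := by
    rw [sum_congr rfl fun y hy => hO.card_filter_tangents_mem hπ (Set.mem_toFinset.1 hy).2,
      sum_const, smul_eq_mul, mul_one, ← Set.ncard_eq_toFinset_card', hL2]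
  have hsplit := sum_sdiff hon_sub (f := f)
  set off := L.toFinset \ (L ∩ O).toFinset
  have hcard_off : #off = q - 1 := by
    rw [card_sdiff_of_subset hon_sub, ← Set.ncard_eq_toFinset_card',
      ← Set.ncard_eq_toFinset_card', G.line_card L hL, hL2]
    omega
  have hoff_pos : ∀ y ∈ off, 1 ≤ f y := fun y hy => by
    obtain ⟨hyL, hyO⟩ := mem_sdiff.1 hy
    rw [Set.mem_toFinset] at hyL hyO
    obtain ⟨t, ht, hyt⟩ := hO.exists_tangent_mem hq hπ (hLπ hyL) fun h => hyO ⟨hyL, h⟩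
    exact card_pos.2 ⟨t, mem_filter.2 ⟨ht, hyt⟩⟩
  have hoff : ∑ y ∈ off, 1 = ∑ y ∈ off, f y := by
    refine le_antisymm (sum_le_sum hoff_pos) ?_
    rw [sum_const, smul_eq_mul, mul_one, hcard_off]
    omega
  exact ((sum_eq_sum_iff_of_le hoff_pos).1 hoff x
    (mem_sdiff.2 ⟨Set.mem_toFinset.2 hxL, fun h => hxO (Set.mem_toFinset.1 h).2⟩)).symm

theorem eq_of_mem_tangents (ht : L ∈ G.tangents π O) {y z : G.P} (hy : y ∈ L ∩ O)
    (hz : z ∈ L ∩ O) : y = z :=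
  Set.ncard_le_one_iff_subsingleton.1 (mem_tangents.1 ht).2.2.le hy hz

theorem IsOval.exists_tangents_ne (hq0 : q ≠ 0) (hπ : π ∈ G.planes) (hO : G.IsOval π O) :
    ∃ t₁ ∈ G.tangents π O, ∃ t₂ ∈ G.tangents π O, t₁ ≠ t₂ := by
  obtain ⟨a, ha, b, hb, hab⟩ := (Set.one_lt_ncard).1 (by rw [hO.2.1]; omega : 1 < O.ncard)
  obtain ⟨ta, hta⟩ := card_pos.1 (hO.card_filter_tangents_mem hπ ha).ge
  obtain ⟨tb, htb⟩ := card_pos.1 (hO.card_filter_tangents_mem hπ hb).ge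
  rw [mem_filter] at hta htb
  refine ⟨ta, hta.1, tb, htb.1, fun h => hab ?_⟩
  exact eq_of_mem_tangents hta.1 ⟨hta.2, ha⟩ ⟨h ▸ htb.2, hb⟩

theorem IsOval.exists_kernel (hq : Even q) (hq0 : q ≠ 0) (hπ : π ∈ G.planes)
    (hO : G.IsOval π O) : ∃ k, G.IsKernel π O k := by
  obtain ⟨t₁, ht₁, t₂, ht₂, h12⟩ := hO.exists_tangents_ne hq0 hπ
  obtain ⟨ht₁l, ht₁π, -⟩ := mem_tangents.1 ht₁
  obtain ⟨ht₂l, ht₂π, -⟩ := mem_tangents.1 ht₂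
  obtain ⟨k, hk₁, hk₂⟩ := inter_nonempty hπ ht₁l ht₁π ht₂l ht₂π
  have htwo : 1 < #{t ∈ G.tangents π O | k ∈ t} :=
    one_lt_card.2 ⟨t₁, mem_filter.2 ⟨ht₁, hk₁⟩, t₂, mem_filter.2 ⟨ht₂, hk₂⟩, h12⟩
  have hkO : k ∉ O := fun hkO => by
    have := hO.card_filter_tangents_mem hπ hkO
    omega
  have hno_secant : ∀ L ∈ G.pencil π k, (L ∩ O).ncard ≤ 1 := fun L hL => by
    obtain ⟨hL, hLπ, hkL⟩ := mem_pencil.1 hL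
    by_contra! h2
    have := hO.card_filter_tangents_mem_of_secant hq hπ hL hLπ
      (le_antisymm (hO.2.2 L hL hLπ) h2) hkL hkO
    omega
  have hsum : ∑ L ∈ G.pencil π k, (L ∩ O).ncard = ∑ L ∈ G.pencil π k, 1 := by
    rw [sum_pencil_ncard_inter hπ (ht₁π hk₁) hO.1 hkO, hO.2.1, sum_const,
      card_pencil hπ (ht₁π hk₁), smul_eq_mul, mul_one]
  exact ⟨k, ht₁π hk₁, hkO, fun L hL hLπ hkL =>
    (sum_eq_sum_iff_of_le hno_secant).1 hsum L (mem_pencil.2 ⟨hL, hLπ, hkL⟩)⟩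

theorem IsKernel.mem_of_mem_tangents (hπ : π ∈ G.planes) (hO : G.IsOval π O)
    (hk : G.IsKernel π O k) {t : Set G.P} (ht : t ∈ G.tangents π O) : k ∈ t := by
  obtain ⟨c, hct, hcO⟩ := (Set.ncard_pos).1 ((mem_tangents.1 ht).2.2 ▸ one_pos)
  obtain ⟨N, ⟨hN, hNπ, hkN, hcN⟩, -⟩ :=
    G.plane_two_points π hπ k hk.1 c (hO.1 hcO) (ne_of_mem_of_not_mem hcO hk.2.1).symm
  have hNt : N ∈ G.tangents π O := mem_tangents.2 ⟨hN, hNπ, hk.2.2 N hN hNπ hkN⟩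
  rwa [← card_le_one.1 (hO.card_filter_tangents_mem hπ hcO).le _ (mem_filter.2 ⟨hNt, hcN⟩) _
    (mem_filter.2 ⟨ht, hct⟩)]

theorem IsKernel.unique (hq0 : q ≠ 0) (hπ : π ∈ G.planes) (hO : G.IsOval π O) {k' : G.P}
    (hk : G.IsKernel π O k) (hk' : G.IsKernel π O k') : k = k' := by
  obtain ⟨t₁, ht₁, t₂, ht₂, h12⟩ := hO.exists_tangents_ne hq0 hπ
  obtain ⟨ht₁l, ht₁π, -⟩ := mem_tangents.1 ht₁
  obtain ⟨ht₂l, ht₂π, -⟩ := mem_tangents.1 ht₂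
  exact inter_subsingleton hπ ht₁l ht₁π ht₂l ht₂π h12
    ⟨hk.mem_of_mem_tangents hπ hO ht₁, hk.mem_of_mem_tangents hπ hO ht₂⟩
    ⟨hk'.mem_of_mem_tangents hπ hO ht₁, hk'.mem_of_mem_tangents hπ hO ht₂⟩

theorem IsKernel.ncard_inter_insert (hπ : π ∈ G.planes) (hO : G.IsOval π O)
    (hk : G.IsKernel π O k) (hL : L ∈ G.lines) (hLπ : L ⊆ π) :
    (L ∩ insert k O).ncard = 0 ∨ (L ∩ insert k O).ncard = 2 := by
  by_cases hkL : k ∈ L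
  · rw [Set.inter_insert_of_mem hkL, Set.ncard_insert_of_notMem fun h => hk.2.1 h.2,
      hk.2.2 L hL hLπ hkL]
    exact .inr rfl
  · rw [Set.inter_insert_of_notMem hkL]
    have h1 : (L ∩ O).ncard ≠ 1 := fun h1 =>
      hkL (hk.mem_of_mem_tangents hπ hO (mem_tangents.2 ⟨hL, hLπ, h1⟩))
    have h2 := hO.2.2 L hL hLπ
    omega

theorem inter_eq_empty_of_ncard_eq_one (hq0 : q ≠ 0) (h2 : G.Prop2 X) (hπ : π ∈ G.planes)
    (hS : (X ∩ π).ncard = 1) : ((X \ G.A1 X) ∪ G.A2 X) ∩ π = ∅ := by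
  refine Set.eq_empty_of_forall_notMem fun y ⟨hy, hyπ⟩ => hy.elim ?_ ?_
  · exact fun hy => hy.2 ⟨hy.1, π, hπ, hyπ, hS⟩
  · intro hy
    have := (h2 π hπ y hy hyπ).1.2.1
    omega

theorem inter_eq_insert_of_isKernel (hq0 : q ≠ 0) (h1 : G.Prop1 X) (h2 : G.Prop2 X)
    (hπ : π ∈ G.planes) (hO : G.IsOval π (X ∩ π)) {k : G.P} (hk : G.IsKernel π (X ∩ π) k) :
    ((X \ G.A1 X) ∪ G.A2 X) ∩ π = insert k (X ∩ π) := by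
  ext y
  constructor
  · rintro ⟨hy | hy, hyπ⟩
    · exact .inr ⟨hy.1, hyπ⟩
    · exact .inl ((h2 π hπ y hy hyπ).2.unique hq0 hπ hO hk)
  · rintro (rfl | ⟨hyX, hyπ⟩)
    · exact ⟨.inr ⟨π, hπ, hO, hk⟩, hk.1⟩
    · refine ⟨.inl ⟨hyX, fun hyA1 => ?_⟩, hyπ⟩
      have := h1 π hπ y hyA1 hyπ
      have := hO.2.1
      omega

end KleinGeom

/-- For a generalized quadratic set of type (SC) on `Q⁺(5,q)`, `q` even,
satisfying properties (1) and (2), the set `(X \ A₁) ∪ A₂` is a hyperoval of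
`Q⁺(5,q)`: it is nonempty, every plane meets it in `∅` or in a hyperoval
(`q+2` points, no three collinear) of that plane, and every line meets it in
`0` or `2` points. -/
theorem gqs_hyperoval (q : ℕ) (hq : Even q) (hq2 : 2 ≤ q)
    (G : KleinGeom q) (X : Set G.P)
    (hX : G.IsGQS X) (h1 : G.Prop1 X) (h2 : G.Prop2 X) :
    ((X \ G.A1 X) ∪ G.A2 X).Nonempty ∧
    (∀ π ∈ G.planes, ((X \ G.A1 X) ∪ G.A2 X) ∩ π = ∅ ∨
      ((((X \ G.A1 X) ∪ G.A2 X) ∩ π).ncard = q + 2 ∧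
        ∀ L ∈ G.lines, L ⊆ π →
          (L ∩ (((X \ G.A1 X) ∪ G.A2 X) ∩ π)).ncard ≤ 2)) ∧
    (∀ L ∈ G.lines, (L ∩ ((X \ G.A1 X) ∪ G.A2 X)).ncard = 0 ∨
      (L ∩ ((X \ G.A1 X) ∪ G.A2 X)).ncard = 2) := by
  obtain ⟨htype, -, πC, hπC, hC⟩ := hX
  have hq0 : q ≠ 0 := by omega
  set H := (X \ G.A1 X) ∪ G.A2 X
  have hplane : ∀ π ∈ G.planes, H ∩ π = ∅ ∨ ∃ k, G.IsOval π (X ∩ π) ∧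
      G.IsKernel π (X ∩ π) k ∧ H ∩ π = insert k (X ∩ π) := fun π hπ => by
    rcases htype π hπ with hS | hO
    · exact .inl (KleinGeom.inter_eq_empty_of_ncard_eq_one hq0 h2 hπ hS)
    · obtain ⟨k, hk⟩ := hO.exists_kernel hq hq0 hπ
      exact .inr ⟨k, hO, hk, KleinGeom.inter_eq_insert_of_isKernel hq0 h1 h2 hπ hO hk⟩
  refine ⟨?_, fun π hπ => ?_, fun L hL => ?_⟩
  · obtain ⟨k, hk⟩ := hC.exists_kernel hq hq0 hπC
    exact ⟨k, .inr ⟨πC, hπC, hC, hk⟩⟩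
  · refine (hplane π hπ).imp_right fun ⟨k, hO, hk, hHπ⟩ => ⟨?_, fun L hL hLπ => ?_⟩
    · rw [hHπ, Set.ncard_insert_of_notMem hk.2.1, hO.2.1]
    · have := hHπ ▸ hk.ncard_inter_insert hπ hO hL hLπ
      omega
  · obtain ⟨π, hπ, hLπ⟩ := G.line_in_plane L hL
    rw [← Set.inter_eq_left.2 hLπ, Set.inter_assoc, Set.inter_comm π]
    rcases hplane π hπ with hHπ | ⟨k, hO, hk, hHπ⟩
    · simp [hHπ]
    · exact hHπ ▸ hk.ncard_inter_insert hπ hO hL hLπ
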